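/- arXiv:2503.14123 — 2 statements merged into one kernel-verified Lean document; each statement's English description precedes it below -/
import Mathlib

section
/- Let A be a finite-dimensional normed algebra over ℂ (hence a complete normed algebra), graded by the natural numbers as A = ⊕_{d≥0} A_d with A_d · A_e ⊆ A_{d+e}, 1 ∈ A₀, each A_d a closed linear subspace, and A_d = 0 for d > n. Let X ∈ A₀ and let Y = Y₁ + ⋯ + Y_n with Y_d ∈ A_d. Then the exponential satisfies the terminating Duhamel (Volterra/Dyson) expansion exp(X + Y) = ∑_{k=0}^{n} ∫_{Δ_k} exp(s₀ X) · Y · exp(s₁ X) · Y ⋯ Y · exp(s_k X) ds₁⋯ds_k, where Δ_k = {(s₁,…,s_k) ∈ [0,1]^k : s₁ + ⋯ + s_k ≤ 1}, s₀ := 1 − (s₁ + ⋯ + s_k), and the k = 0 term is exp(X). -/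
/-!
Duhamel's formula `e^{tB} - e^{tX} = ∫₀ᵗ e^{(t-v)B} (B - X) e^{vX} dv`, applied on each slice
`s₁ = v` of the simplex, shows that `R_k(B) = ∫_{Δ_k} e^{s₀B} Y e^{s₁X} ⋯ Y e^{s_kX} ds` satisfies
`R_{k+1}(X + Y) = R_k(X + Y) - R_k(X)`. Since `R_0(B) = e^B`, telescoping gives
`e^{X+Y} = ∑_{k ≤ n} R_k(X) + R_{n+1}(X + Y)`. The sum `⨁_{d ≥ j} A_d` is a right ideal and
these ideals multiply like the grading, so each word `Y e^{s₁X} ⋯ Y e^{s_{n+1}X}` lies in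
`⨁_{d > n} A_d = 0` and the remainder vanishes.
-/

open MeasureTheory NormedSpace

def simplex (k : ℕ) : Set (Fin k → ℝ) := {s | (∀ i, 0 ≤ s i) ∧ ∑ i, s i ≤ 1}

theorem isClosed_simplex (k : ℕ) : IsClosed (simplex k) :=
  (isClosed_Ici (a := 0)).inter
    (isClosed_le (continuous_finsetSum _ fun i _ => continuous_apply i) continuous_const)

theorem isCompact_simplex (k : ℕ) : IsCompact (simplex k) := by
  refine (isCompact_univ_pi fun _ => isCompact_Icc (a := (0 : ℝ)) (b := 1)).of_isClosed_subset
    (isClosed_simplex k) fun s hs => Set.mem_univ_pi.2 fun i => ⟨hs.1 i, ?_⟩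
  exact (Finset.single_le_sum (fun j _ => hs.1 j) (Finset.mem_univ i)).trans hs.2

theorem cons_mem_simplex_iff {k : ℕ} {v : ℝ} {s : Fin k → ℝ} :
    (Fin.cons v s : Fin (k + 1) → ℝ) ∈ simplex (k + 1) ↔
      s ∈ simplex k ∧ v ∈ Set.Icc 0 (1 - ∑ i, s i) := by
  simp only [simplex, Set.mem_ofPred_eq, Fin.forall_fin_succ, Fin.sum_cons, Fin.cons_zero,
    Fin.cons_succ, Set.mem_Icc]
  constructor
  · rintro ⟨⟨hv, hs⟩, hsum⟩
    exact ⟨⟨hs, by linarith [Finset.sum_nonneg fun i (_ : i ∈ Finset.univ) => hs i]⟩, hv,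
      by linarith⟩
  · rintro ⟨⟨hs, -⟩, hv, hvs⟩
    exact ⟨⟨hv, hs⟩, by linarith⟩

theorem setIntegral_simplex_succ {E : Type*} [NormedAddCommGroup E] [NormedSpace ℝ E]
    {k : ℕ} {f : (Fin (k + 1) → ℝ) → E} (hf : Continuous f) :
    ∫ s in simplex (k + 1), f s =
      ∫ s in simplex k, ∫ v in 0..(1 - ∑ i, s i), f (Fin.cons v s) := by
  set e := (MeasurableEquiv.piFinSuccAbove (fun _ : Fin (k + 1) => ℝ) 0).symm
  have he : MeasurePreserving e (volume.prod volume) volume :=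
    (volume_preserving_piFinSuccAbove (fun _ : Fin (k + 1) => ℝ) 0).symm _
  have he_apply : ∀ p, e p = Fin.cons p.1 p.2 := fun p => by
    simp [e, MeasurableEquiv.piFinSuccAbove_symm_apply, Fin.insertNthEquiv, Fin.insertNth_zero']
  have hint : Integrable ((simplex (k + 1)).indicator f) :=
    (integrable_indicator_iff (isClosed_simplex _).measurableSet).2
      (hf.continuousOn.integrableOn_compact (isCompact_simplex _))
  have hslice : ∀ s : Fin k → ℝ, ∫ v, (simplex (k + 1)).indicator f (Fin.cons v s) =
      (simplex k).indicator (fun s => ∫ v in 0..(1 - ∑ i, s i), f (Fin.cons v s)) s := by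
    intro s
    by_cases hs : s ∈ simplex k
    · have hfib : ∀ v, (simplex (k + 1)).indicator f (Fin.cons v s) =
          (Set.Icc 0 (1 - ∑ i, s i)).indicator (fun v => f (Fin.cons v s)) v := fun v => by
        simp only [Set.indicator, cons_mem_simplex_iff, hs, true_and]
      have ht : 0 ≤ 1 - ∑ i, s i := sub_nonneg.2 hs.2
      rw [Set.indicator_of_mem hs, intervalIntegral.integral_of_le ht,
        ← integral_Icc_eq_integral_Ioc, ← integral_indicator measurableSet_Icc]
      simp only [hfib]
    · rw [Set.indicator_of_notMem hs]
      refine integral_eq_zero_of_ae (Filter.Eventually.of_forall fun v => ?_)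
      exact Set.indicator_of_notMem (fun h => hs (cons_mem_simplex_iff.1 h).1) f
  rw [← integral_indicator (isClosed_simplex _).measurableSet, ← he.integral_comp',
    integral_prod_symm _ ?_]
  · simp only [he_apply, hslice]
    rw [integral_indicator (isClosed_simplex _).measurableSet]
  · exact (he.integrable_comp_emb e.measurableEmbedding).2 hint

section Duhamel

variable {A : Type*} [NormedRing A] [NormedAlgebra ℝ A]

noncomputable def dysonWord (X Y : A) {k : ℕ} (s : Fin k → ℝ) : A :=
  (List.ofFn fun i => Y * exp (s i • X)).prod

theorem dysonWord_cons (X Y : A) {k : ℕ} (v : ℝ) (s : Fin k → ℝ) :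
    dysonWord X Y (Fin.cons v s : Fin (k + 1) → ℝ) = Y * exp (v • X) * dysonWord X Y s := by
  simp only [dysonWord, List.ofFn_succ, List.prod_cons, Fin.cons_zero, Fin.cons_succ, mul_assoc]

/-- `dysonTerm X X Y k` is the `k`-th term of the expansion, `dysonTerm (X + Y) X Y k` the remainder
after `k` terms. -/
noncomputable def dysonTerm (B X Y : A) (k : ℕ) : A :=
  ∫ s in simplex k, exp ((1 - ∑ i, s i) • B) * dysonWord X Y s

variable [CompleteSpace A]

@[fun_prop]
theorem Continuous.exp_smul_const {α : Type*} [TopologicalSpace α]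
    {f : α → ℝ} (hf : Continuous f) (X : A) : Continuous fun a => exp (f a • X) :=
  (differentiable_exp_smul_const ℝ X).continuous.comp hf

theorem exp_smul_sub_exp_smul_eq_integral (B X : A) (t : ℝ) :
    exp (t • B) - exp (t • X) = ∫ v in 0..t, exp ((t - v) • B) * (B - X) * exp (v • X) := by
  have hderiv : ∀ v : ℝ, HasDerivAt (fun v : ℝ => exp ((t - v) • B) * exp (v • X))
      (-(exp ((t - v) • B) * (B - X) * exp (v • X))) v := fun v => by
    have hB : HasDerivAt (fun v : ℝ => exp ((t - v) • B)) (-(exp ((t - v) • B) * B)) v := by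
      simpa [Function.comp_def] using
        (hasDerivAt_exp_smul_const B (t - v)).scomp v ((hasDerivAt_id v).const_sub t)
    exact (hB.mul (hasDerivAt_exp_smul_const' X v)).congr_deriv (by noncomm_ring)
  have hftc := intervalIntegral.integral_eq_sub_of_hasDerivAt (fun v _ => hderiv v)
    (Continuous.intervalIntegrable (by fun_prop) 0 t)
  simp only [intervalIntegral.integral_neg, sub_self, sub_zero, zero_smul, exp_zero, one_mul,
    mul_one] at hftc
  rw [← neg_sub, ← hftc, neg_neg]

@[fun_prop]
theorem continuous_dysonWord (X Y : A) (k : ℕ) :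
    Continuous fun s : Fin k → ℝ => dysonWord X Y s := by
  induction k with
  | zero => simpa [dysonWord] using continuous_const
  | succ k ih =>
    have : (fun s : Fin (k + 1) → ℝ => dysonWord X Y s) =
        fun s => Y * exp (s 0 • X) * dysonWord X Y (Fin.tail s) := by
      funext s; rw [← dysonWord_cons, Fin.cons_self_tail]
    rw [this]
    exact (continuous_const.mul (by fun_prop)).mul (ih.comp (by fun_prop))

theorem dysonTerm_zero (B X Y : A) : dysonTerm B X Y 0 = exp B := by
  simp [dysonTerm, dysonWord, simplex, measureReal_def, volume_pi]

theorem dysonTerm_succ (X Y : A) (k : ℕ) :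
    dysonTerm (X + Y) X Y (k + 1) = dysonTerm (X + Y) X Y k - dysonTerm X X Y k := by
  have hslice : ∀ s : Fin k → ℝ,
      ∫ v in 0..(1 - ∑ i, s i), exp ((1 - ∑ i, (Fin.cons v s : Fin (k + 1) → ℝ) i) • (X + Y)) *
          dysonWord X Y (Fin.cons v s : Fin (k + 1) → ℝ) =
        exp ((1 - ∑ i, s i) • (X + Y)) * dysonWord X Y s -
          exp ((1 - ∑ i, s i) • X) * dysonWord X Y s := by
    intro s
    set t := 1 - ∑ i, s i
    have hcons : ∀ v : ℝ,
        exp ((1 - ∑ i, (Fin.cons v s : Fin (k + 1) → ℝ) i) • (X + Y)) *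
          dysonWord X Y (Fin.cons v s : Fin (k + 1) → ℝ) =
        exp ((t - v) • (X + Y)) * (X + Y - X) * exp (v • X) * dysonWord X Y s := fun v => by
      rw [Fin.sum_cons, dysonWord_cons, add_sub_cancel_left, sub_add_eq_sub_sub_swap]
      simp only [mul_assoc]
      rfl
    simp only [hcons]
    have hpull :=
      ((ContinuousLinearMap.mul ℝ A).flip (dysonWord X Y s)).intervalIntegral_comp_comm
        (f := fun v => exp ((t - v) • (X + Y)) * (X + Y - X) * exp (v • X))
        (μ := volume) (a := 0) (b := t) (Continuous.intervalIntegrable (by fun_prop) _ _)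
    simp only [ContinuousLinearMap.flip_apply, ContinuousLinearMap.mul_apply'] at hpull
    rw [hpull, ← exp_smul_sub_exp_smul_eq_integral, sub_mul]
  have hint : ∀ B : A, IntegrableOn (fun s : Fin k → ℝ => exp ((1 - ∑ i, s i) • B) *
      dysonWord X Y s) (simplex k) := fun B =>
    (Continuous.continuousOn (by fun_prop)).integrableOn_compact (isCompact_simplex k)
  rw [dysonTerm, setIntegral_simplex_succ (by fun_prop), dysonTerm, dysonTerm,
    ← integral_sub (hint _) (hint _)]
  simp only [hslice]

theorem exp_add_eq_sum_dysonTerm_add (X Y : A) (k : ℕ) :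
    exp (X + Y) = ∑ j ∈ Finset.range k, dysonTerm X X Y j + dysonTerm (X + Y) X Y k := by
  induction k with
  | zero => simp [dysonTerm_zero]
  | succ k ih => rw [ih, Finset.sum_range_succ, dysonTerm_succ]; abel

end Duhamel

section GradeGE

variable {R A : Type*} [CommSemiring R] [Semiring A] [Algebra R A] (𝒜 : ℕ → Submodule R A)

noncomputable def gradeGE (j : ℕ) : Submodule R A := ⨆ d, ⨆ _ : j ≤ d, 𝒜 d

theorem le_gradeGE {j d : ℕ} (h : j ≤ d) : 𝒜 d ≤ gradeGE 𝒜 j :=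
  le_iSup_of_le d (le_iSup_of_le h le_rfl)

theorem gradeGE_eq_bot {n : ℕ} (hvan : ∀ d, n < d → 𝒜 d = ⊥) : gradeGE 𝒜 (n + 1) = ⊥ :=
  le_bot_iff.1 <| iSup₂_le fun d hd => (hvan d hd).le

variable [GradedRing 𝒜]

theorem gradeGE_zero : gradeGE 𝒜 0 = ⊤ :=
  eq_top_iff.2 <| (DirectSum.Decomposition.isInternal 𝒜).submodule_iSup_eq_top.ge.trans <|
    iSup_le fun d => le_gradeGE 𝒜 (Nat.zero_le d)

theorem gradeGE_mul_le (i j : ℕ) : gradeGE 𝒜 i * gradeGE 𝒜 j ≤ gradeGE 𝒜 (i + j) := by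
  simp only [gradeGE, Submodule.iSup_mul, Submodule.mul_iSup, iSup_le_iff]
  intro e he d hd
  exact (Submodule.mul_le.2 fun a ha b hb => SetLike.mul_mem_graded ha hb).trans
    (le_gradeGE 𝒜 (add_le_add hd he))

theorem mul_mem_gradeGE {j : ℕ} {a : A} (ha : a ∈ gradeGE 𝒜 j) (b : A) :
    a * b ∈ gradeGE 𝒜 j := by
  simpa using gradeGE_mul_le 𝒜 j 0 (Submodule.mul_mem_mul ha (gradeGE_zero 𝒜 ▸ Submodule.mem_top))

theorem list_prod_mem_gradeGE {l : List A} (hl : ∀ a ∈ l, a ∈ gradeGE 𝒜 1) :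
    l.prod ∈ gradeGE 𝒜 l.length := by
  induction l with
  | nil => exact le_gradeGE 𝒜 le_rfl (SetLike.one_mem_graded 𝒜)
  | cons a l ih =>
    rw [List.prod_cons, List.length_cons, add_comm]
    exact gradeGE_mul_le 𝒜 1 l.length (Submodule.mul_mem_mul (hl a (by simp))
      (ih fun b hb => hl b (List.mem_cons_of_mem a hb)))

end GradeGE

theorem stmt_2_general {A : Type*} [NormedRing A] [NormedAlgebra ℂ A] [CompleteSpace A]
    (𝒜 : ℕ → Submodule ℂ A) [GradedRing 𝒜]
    (n : ℕ) (hvan : ∀ d, n < d → 𝒜 d = ⊥)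
    (X : A)
    (Yc : ℕ → A) (hYc : ∀ d, 1 ≤ d → d ≤ n → Yc d ∈ 𝒜 d) :
    NormedSpace.exp (X + ∑ d ∈ Finset.Icc 1 n, Yc d) =
      ∑ k ∈ Finset.range (n + 1),
        ∫ s in {s : Fin k → ℝ | (∀ i, 0 ≤ s i) ∧ ∑ i, s i ≤ 1},
          NormedSpace.exp ((1 - ∑ i, s i) • X) *
            (List.ofFn fun i : Fin k =>
              (∑ d ∈ Finset.Icc 1 n, Yc d) * NormedSpace.exp (s i • X)).prod := by
  set Y := ∑ d ∈ Finset.Icc 1 n, Yc d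
  have hY : Y ∈ gradeGE 𝒜 1 := Submodule.sum_mem _ fun d hd => by
    obtain ⟨hd1, hdn⟩ := Finset.mem_Icc.1 hd
    exact le_gradeGE 𝒜 hd1 (hYc d hd1 hdn)
  have hword : ∀ s : Fin (n + 1) → ℝ, dysonWord X Y s = 0 := fun s => by
    have hmem := list_prod_mem_gradeGE 𝒜 (l := List.ofFn fun i => Y * exp (s i • X))
      (List.forall_mem_ofFn_iff.2 fun i => mul_mem_gradeGE 𝒜 hY _)
    rwa [List.length_ofFn, gradeGE_eq_bot 𝒜 hvan, Submodule.mem_bot] at hmem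
  have hremainder : dysonTerm (X + Y) X Y (n + 1) = 0 := by
    simp only [dysonTerm, hword, mul_zero, integral_zero]
  rw [exp_add_eq_sum_dysonTerm_add X Y (n + 1), hremainder, add_zero]
  rfl

/-- Terminating Duhamel (Volterra/Dyson) expansion in a finite-dimensional normed
`ℂ`-algebra graded by `ℕ` and vanishing above degree `n`: for `X` of degree `0` and
`Y = Y₁ + ⋯ + Y_n` with `Y_d` of degree `d`,
`exp(X+Y) = ∑_{k=0}^{n} ∫_{Δ_k} e^{s₀X} Y e^{s₁X} Y ⋯ Y e^{s_kX} ds₁⋯ds_k`,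
where `Δ_k = {s ∈ [0,1]^k : s₁ + ⋯ + s_k ≤ 1}` and `s₀ = 1 - (s₁ + ⋯ + s_k)`. -/
theorem stmt_2 {A : Type*} [NormedRing A] [NormedAlgebra ℂ A]
    [FiniteDimensional ℂ A] [CompleteSpace A]
    (𝒜 : ℕ → Submodule ℂ A) [GradedRing 𝒜]
    (hclosed : ∀ d, IsClosed (𝒜 d : Set A))
    (n : ℕ) (hvan : ∀ d, n < d → 𝒜 d = ⊥)
    (X : A) (hX : X ∈ 𝒜 0)
    (Yc : ℕ → A) (hYc : ∀ d, 1 ≤ d → d ≤ n → Yc d ∈ 𝒜 d) :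
    NormedSpace.exp (X + ∑ d ∈ Finset.Icc 1 n, Yc d) =
      ∑ k ∈ Finset.range (n + 1),
        ∫ s in {s : Fin k → ℝ | (∀ i, 0 ≤ s i) ∧ ∑ i, s i ≤ 1},
          NormedSpace.exp ((1 - ∑ i, s i) • X) *
            (List.ofFn fun i : Fin k =>
              (∑ d ∈ Finset.Icc 1 n, Yc d) * NormedSpace.exp (s i • X)).prod :=
  stmt_2_general 𝒜 n hvan X Yc hYc
end

section
/- Let a be a positive real number, let l be a natural number, and let 0 < ρ < a. Then, for the positively oriented circle of radius ρ centered at a, (2πi)⁻¹ ∮_{|z−a|=ρ} z^{−1/2} · (a − z)^{−(l+1)} dz = −((2l)! / (4^l · (l!)²)) · a^{−1/2−l}, where z^{−1/2} denotes the principal branch of the complex power (holomorphic on ℂ ∖ (−∞, 0]) and (a − z)^{−(l+1)} means ((a − z)^{l+1})⁻¹. -/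
/-!
By Cauchy's formula for derivatives, integrating `f z · (a - z)^{-(l+1)} = (-1)^{l+1} f z / (z - a)^{l+1}`
over a circle around `a` gives `2πi (-1)^{l+1} f^{(l)}(a) / l!`. Here `f z = z^{-1/2}` is holomorphic
on the closed disc, which lies in the half-plane `re z > 0`, and
`f^{(l)}(a) = (-1/2)(-3/2)⋯(-1/2 - l + 1) a^{-1/2-l}`, a falling factorial equal to
`(-1)^l (2l)! / (4^l l!)`.
-/

open Complex Metric Real

theorem Complex.closedBall_ofReal_subset_slitPlane {a ρ : ℝ} (h : ρ < a) :
    closedBall (a : ℂ) ρ ⊆ slitPlane := fun z hz => by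
  have hre : |z.re - a| ≤ ρ := by
    simpa using (abs_re_le_norm (z - a)).trans (mem_closedBall_iff_norm.mp hz)
  exact Or.inl (by linarith [abs_le.mp hre])

theorem Complex.iteratedDeriv_cpow_const {z : ℂ} (hz : z ∈ slitPlane) (r : ℂ) (n : ℕ) :
    iteratedDeriv n (· ^ r) z = (descPochhammer ℂ n).eval r * z ^ (r - n) := by
  induction n generalizing z with
  | zero => simp
  | succ n ih =>
    have hnhds : iteratedDeriv n (· ^ r) =ᶠ[nhds z]
        fun w => (descPochhammer ℂ n).eval r * w ^ (r - n) := by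
      filter_upwards [isOpen_slitPlane.mem_nhds hz] with w hw using ih hw
    rw [iteratedDeriv_succ, hnhds.deriv_eq, deriv_const_mul_field, Complex.deriv_cpow_const hz,
      descPochhammer_succ_right, Polynomial.eval_mul, Polynomial.eval_sub, Polynomial.eval_X,
      Polynomial.eval_natCast]
    push_cast
    ring_nf

theorem descPochhammer_eval_neg_half {K : Type*} [Field K] [CharZero K] (n : ℕ) :
    (descPochhammer K n).eval (-(1 / 2)) =
      (-1) ^ n * (2 * n).factorial / (4 ^ n * n.factorial) := by
  induction n with
  | zero => simp
  | succ n ih =>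
    rw [descPochhammer_succ_right, Polynomial.eval_mul, ih, Polynomial.eval_sub, Polynomial.eval_X,
      Polynomial.eval_natCast, Nat.mul_succ, Nat.factorial_succ, Nat.factorial_succ,
      Nat.factorial_succ]
    push_cast
    field_simp
    ring

theorem DifferentiableOn.circleIntegral_mul_inv_center_sub_pow {f : ℂ → ℂ} {c : ℂ} {R : ℝ}
    (hR : 0 < R) (n : ℕ) (hf : DifferentiableOn ℂ f (closedBall c R)) :
    (2 * π * I)⁻¹ * ∮ z in C(c, R), f z * ((c - z) ^ (n + 1))⁻¹ =
      (-1) ^ (n + 1) * iteratedDeriv n f c / n.factorial := by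
  have hintegrand (z : ℂ) :
      f z * ((c - z) ^ (n + 1))⁻¹ = (-1) ^ (n + 1) * ((1 / (z - c) ^ (n + 1)) • f z) := by
    rw [← neg_sub, neg_pow, mul_inv, ← inv_pow, inv_neg_one, smul_eq_mul, one_div]
    ring
  simp_rw [hintegrand, circleIntegral.integral_const_mul,
    hf.circleIntegral_one_div_sub_center_pow_smul hR n, smul_eq_mul]
  field_simp [two_pi_I_ne_zero]

/-- Cauchy-formula evaluation of the contour integral underlying the resolvent
symbols of `√Δ`: for `0 < ρ < a`,
`(2πi)⁻¹ ∮_{|z-a|=ρ} z^{-1/2} (a - z)^{-(l+1)} dz = -((2l)!/(4^l (l!)²)) a^{-1/2-l}`. -/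
theorem stmt_10 (a : ℝ) (ha : 0 < a) (l : ℕ) (ρ : ℝ) (hρ : 0 < ρ) (hρa : ρ < a) :
    (2 * (Real.pi : ℂ) * Complex.I)⁻¹ *
        (∮ z in C((a : ℂ), ρ), z ^ (-(1 / 2) : ℂ) * (((a : ℂ) - z) ^ (l + 1))⁻¹) =
      -(((2 * l).factorial : ℂ) / (4 ^ l * ((l.factorial : ℂ)) ^ 2)) *
        (a : ℂ) ^ (-(1 / 2) - (l : ℂ)) := by
  have hdiff : DifferentiableOn ℂ (· ^ (-(1 / 2) : ℂ)) (closedBall (a : ℂ) ρ) := fun z hz =>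
    (differentiableAt_id.cpow_const
      (closedBall_ofReal_subset_slitPlane hρa hz)).differentiableWithinAt
  rw [hdiff.circleIntegral_mul_inv_center_sub_pow hρ l,
    iteratedDeriv_cpow_const (ofReal_mem_slitPlane.mpr ha), descPochhammer_eval_neg_half]
  have hsign : (-1 : ℂ) ^ (l + 1) * (-1) ^ l = -1 := by
    rw [← pow_add]
    exact Odd.neg_one_pow ⟨l, by ring⟩
  linear_combination ((2 * l).factorial : ℂ) / (4 ^ l * (l.factorial : ℂ) ^ 2) *
    (a : ℂ) ^ (-(1 / 2) - (l : ℂ)) * hsign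
end
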